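/- arXiv:1904.07365 — 5 statements merged into one kernel-verified Lean document; each statement's English description precedes it below -/
import Mathlib

section
/- Let N ≥ 1, let H_S be an N×N Hermitian complex matrix, let g > 0, γ > 0, ε ∈ ℝ, and let G(t) = g² e^{-(γ/2)t - iεt}. Suppose ψ : ℝ → ℂ^N is continuously differentiable and satisfies, for all t ≥ 0, ψ'(t) = -i H_S ψ(t) - ∫₀ᵗ G(t-s) ψ(s) ds. Define φ(t) = -i g ∫₀ᵗ e^{-(γ/2 + iε)(t-s)} ψ(s) ds. Then the combined vector ψ̃(t) = ψ(t) ⊕ φ(t) ∈ ℂ^{2N} satisfies the linear ODE ψ̃'(t) = -i H_eff ψ̃(t) for all t ≥ 0, where H_eff is the 2N×2N block matrix with blocks [[H_S, g·I_N], [g·I_N, (ε - iγ/2)·I_N]], and the initial condition is ψ̃(0) = ψ(0) ⊕ 0. -/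
/-!
The auxiliary amplitude `φ` is `-i g` times the convolution of `ψ` with `e^{-a t}`,
`a = γ/2 + iε`; writing it as `e^{-a t} ∫₀ᵗ e^{a s} ψ s ds` and differentiating gives
`φ' = -i g ψ - a φ`. Since `G (t - s) = (i g) (-i g) e^{-a (t - s)}`, the memory integral in the
equation for `ψ` is exactly `i g φ`, so the two equations are the two block rows of
`ψ̃' = -i H_eff ψ̃`.
-/

open Matrix Complex

noncomputable section

theorem HasDerivAt.sum_elim {𝕜 F ι κ : Type*} [NontriviallyNormedField 𝕜]
    [NormedAddCommGroup F] [NormedSpace 𝕜 F] {u : 𝕜 → ι → F} {v : 𝕜 → κ → F}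
    {u' : ι → F} {v' : κ → F} {t : 𝕜} (hu : HasDerivAt u u' t) (hv : HasDerivAt v v' t) :
    HasDerivAt (fun t => Sum.elim (u t) (v t)) (Sum.elim u' v') t := by
  refine hasDerivAt_pi.mpr fun i => ?_
  cases i with
  | inl i => exact hasDerivAt_pi.mp hu i
  | inr i => exact hasDerivAt_pi.mp hv i

theorem Matrix.fromBlocks_smul_one_mulVec_sum_elim {R n : Type*} [CommRing R] [Fintype n]
    [DecidableEq n] (A : Matrix n n R) (b c d : R) (x y : n → R) :
    fromBlocks A (b • 1) (c • 1) (d • 1) *ᵥ Sum.elim x y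
      = Sum.elim (A *ᵥ x + b • y) (c • x + d • y) := by
  simp [fromBlocks_mulVec, smul_mulVec, one_mulVec]

theorem integral_exp_mul_sub_smul_eq {E : Type*} [NormedAddCommGroup E] [NormedSpace ℂ E]
    (f : ℝ → E) (a : ℂ) (t : ℝ) :
    ∫ s in (0:ℝ)..t, cexp (-a * (t - s)) • f s
      = cexp (-a * t) • ∫ s in (0:ℝ)..t, cexp (a * s) • f s := by
  rw [← intervalIntegral.integral_smul]
  refine intervalIntegral.integral_congr fun s _ => ?_
  rw [smul_smul, ← Complex.exp_add]
  ring_nf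

theorem hasDerivAt_integral_exp_mul_sub_smul {E : Type*} [NormedAddCommGroup E]
    [NormedSpace ℂ E] [CompleteSpace E] {f : ℝ → E} (hf : Continuous f) (a : ℂ) (t : ℝ) :
    HasDerivAt (fun t : ℝ => ∫ s in (0:ℝ)..t, cexp (-a * (t - s)) • f s)
      (f t - a • ∫ s in (0:ℝ)..t, cexp (-a * (t - s)) • f s) t := by
  have hcont : Continuous fun s : ℝ => cexp (a * s) • f s := by fun_prop
  have hprim : HasDerivAt (fun t => ∫ s in (0:ℝ)..t, cexp (a * s) • f s)
      (cexp (a * t) • f t) t :=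
    intervalIntegral.integral_hasDerivAt_right (hcont.intervalIntegrable 0 t)
      (hcont.stronglyMeasurableAtFilter _ _) hcont.continuousAt
  have hexp : HasDerivAt (fun t : ℝ => cexp (-a * t)) (cexp (-a * t) * -a) t := by
    simpa using ((hasDerivAt_id (t : ℂ)).const_mul (-a)).cexp.comp_ofReal
  simp only [integral_exp_mul_sub_smul_eq]
  refine (hexp.smul hprim).congr_deriv ?_
  rw [smul_smul, ← Complex.exp_add, neg_mul, neg_add_cancel, Complex.exp_zero, one_smul]
  module

theorem stmt0_general (N : ℕ)
    (H_S : Matrix (Fin N) (Fin N) ℂ)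
    (g γ ε : ℝ)
    (G : ℝ → ℂ)
    (hG : ∀ t : ℝ, G t = (g : ℂ) ^ 2 * Complex.exp (-(γ / 2 : ℝ) * t - Complex.I * ε * t))
    (ψ : ℝ → Fin N → ℂ) (hψC : ContDiff ℝ 1 ψ)
    (hψ : ∀ t : ℝ, 0 ≤ t → HasDerivAt ψ
      ((-Complex.I) • H_S.mulVec (ψ t) - ∫ s in (0:ℝ)..t, G (t - s) • ψ s) t)
    (φ : ℝ → Fin N → ℂ)
    (hφ : ∀ t : ℝ, φ t = (-Complex.I * g) • ∫ s in (0:ℝ)..t,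
      Complex.exp (-((γ / 2 : ℝ) + Complex.I * ε) * (t - s)) • ψ s)
    (ψt : ℝ → (Fin N ⊕ Fin N) → ℂ)
    (hψt : ∀ t, ψt t = Sum.elim (ψ t) (φ t))
    (Heff : Matrix (Fin N ⊕ Fin N) (Fin N ⊕ Fin N) ℂ)
    (hHeff : Heff = Matrix.fromBlocks H_S ((g : ℂ) • 1) ((g : ℂ) • 1)
      (((ε : ℂ) - Complex.I * γ / 2) • 1)) :
    (∀ t : ℝ, 0 ≤ t → HasDerivAt ψt ((-Complex.I) • Heff.mulVec (ψt t)) t)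
    ∧ ψt 0 = Sum.elim (ψ 0) 0 := by
  set a : ℂ := ((γ / 2 : ℝ) : ℂ) + I * ε
  have hmemory : ∀ t, ∫ s in (0:ℝ)..t, G (t - s) • ψ s = (I * g) • φ t := by
    intro t
    have hcoeff : I * g * (-I * g) = (g : ℂ) ^ 2 := by linear_combination -(g : ℂ) ^ 2 * I_sq
    rw [hφ, smul_smul, hcoeff, ← intervalIntegral.integral_smul]
    refine intervalIntegral.integral_congr fun s _ => ?_
    rw [hG, ← smul_smul]
    congr 3
    push_cast [a]
    ring
  refine ⟨fun t ht => ?_, by simp [hψt, hφ]⟩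
  have hψ' := hψ t ht
  rw [hmemory] at hψ'
  have hφ' : HasDerivAt φ ((-I * g) • ψ t - a • φ t) t := by
    rw [funext hφ]
    refine ((hasDerivAt_integral_exp_mul_sub_smul hψC.continuous a t).const_smul
      (-I * g)).congr_deriv ?_
    module
  rw [hψt t, funext hψt, hHeff, fromBlocks_smul_one_mulVec_sum_elim]
  convert hψ'.sum_elim hφ' using 1
  ext (j | j)
  · simp only [Sum.elim_inl, Pi.smul_apply, Pi.add_apply, Pi.sub_apply, smul_eq_mul]
    ring
  · simp only [Sum.elim_inr, Pi.smul_apply, Pi.add_apply, Pi.sub_apply, smul_eq_mul, a]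
    push_cast
    linear_combination (γ / 2 * φ t j : ℂ) * I_sq

theorem stmt0 (N : ℕ) (hN : 1 ≤ N)
    (H_S : Matrix (Fin N) (Fin N) ℂ) (hH : H_S.IsHermitian)
    (g γ ε : ℝ) (hg : 0 < g) (hγ : 0 < γ)
    (G : ℝ → ℂ)
    (hG : ∀ t : ℝ, G t = (g : ℂ) ^ 2 * Complex.exp (-(γ / 2 : ℝ) * t - Complex.I * ε * t))
    (ψ : ℝ → Fin N → ℂ) (hψC : ContDiff ℝ 1 ψ)
    (hψ : ∀ t : ℝ, 0 ≤ t → HasDerivAt ψ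
      ((-Complex.I) • H_S.mulVec (ψ t) - ∫ s in (0:ℝ)..t, G (t - s) • ψ s) t)
    (φ : ℝ → Fin N → ℂ)
    (hφ : ∀ t : ℝ, φ t = (-Complex.I * g) • ∫ s in (0:ℝ)..t,
      Complex.exp (-((γ / 2 : ℝ) + Complex.I * ε) * (t - s)) • ψ s)
    (ψt : ℝ → (Fin N ⊕ Fin N) → ℂ)
    (hψt : ∀ t, ψt t = Sum.elim (ψ t) (φ t))
    (Heff : Matrix (Fin N ⊕ Fin N) (Fin N ⊕ Fin N) ℂ)
    (hHeff : Heff = Matrix.fromBlocks H_S ((g : ℂ) • 1) ((g : ℂ) • 1)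
      (((ε : ℂ) - Complex.I * γ / 2) • 1)) :
    (∀ t : ℝ, 0 ≤ t → HasDerivAt ψt ((-Complex.I) • Heff.mulVec (ψt t)) t)
    ∧ ψt 0 = Sum.elim (ψ 0) 0 :=
  stmt0_general N H_S g γ ε G hG ψ hψC hψ φ hφ ψt hψt Heff hHeff
end
end

section
/- Let N ≥ 1, let H_S be an N×N Hermitian complex matrix, let g > 0, γ > 0, ε ∈ ℝ, and let G(t) = g² e^{-(γ/2)t - iεt}. Suppose ψ : ℝ → ℂ^N is continuously differentiable and satisfies ψ'(t) = -i H_S ψ(t) - ∫₀ᵗ G(t-s) ψ(s) ds for all t ≥ 0, and set φ(t) = -i g ∫₀ᵗ e^{-(γ/2 + iε)(t-s)} ψ(s) ds. Then the vector ψ̃_I(t) = e^{i H_S t} ψ(t) ⊕ e^{i H_S t} φ(t) ∈ ℂ^{2N} satisfies ψ̃_I'(t) = -i H_{I,eff} ψ̃_I(t) for all t ≥ 0, where H_{I,eff} is the 2N×2N block matrix with blocks [[0, g·I_N], [g·I_N, -H_S + (ε - iγ/2)·I_N]], with initial condition ψ̃_I(0) = ψ(0) ⊕ 0. -/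
/-!
The kernel is a single damped exponential, so the memory integral is carried by one auxiliary
amplitude: `φ' = -i g ψ - (γ/2 + iε) φ` and `∫₀ᵗ G(t-s) ψ(s) ds = i g φ(t)`. Hence `χ = ψ ⊕ φ`
solves a closed Schrödinger equation `χ' = -i (H₀ + H_{I,eff}) χ` with `H₀ = H_S ⊕ H_S`.
The blocks of `H_{I,eff}` are scalars or polynomials in `H_S`, so `H₀` commutes with it, and in
the interaction picture `e^{i H₀ t} χ = ψ̃_I` only `H_{I,eff}` survives.
-/

open Matrix Complex

attribute [local instance] Matrix.linftyOpNormedAddCommGroup Matrix.linftyOpNormedSpace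
  Matrix.linftyOpNormedRing Matrix.linftyOpNormedAlgebra

theorem Matrix.exp_fromBlocks_zero_zero {m n : Type*} [Fintype m] [DecidableEq m]
    [Fintype n] [DecidableEq n] (A : Matrix m m ℂ) (D : Matrix n n ℂ) :
    NormedSpace.exp (fromBlocks A 0 0 D) =
      fromBlocks (NormedSpace.exp A) 0 0 (NormedSpace.exp D) := by
  let L : Matrix m m ℂ × Matrix n n ℂ →+ Matrix (m ⊕ n) (m ⊕ n) ℂ :=
    { toFun := fun p => fromBlocks p.1 0 0 p.2
      map_zero' := fromBlocks_zero
      map_add' := fun p q => by simp [fromBlocks_add] }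
  have hL : Continuous L :=
    continuous_fst.matrix_fromBlocks continuous_const continuous_const continuous_snd
  have h := ((NormedSpace.exp_series_hasSum_exp' (𝕂 := ℂ) A).prodMk
    (NormedSpace.exp_series_hasSum_exp' (𝕂 := ℂ) D)).map L hL
  refine (NormedSpace.exp_series_hasSum_exp' (𝕂 := ℂ) (fromBlocks A 0 0 D)).unique ?_
  simp only [fromBlocks_diagonal_pow, fromBlocks_smul, smul_zero]
  exact h

theorem hasDerivAt_exp_I_mul_smul {𝔸 : Type*} [NormedRing 𝔸] [NormedAlgebra ℂ 𝔸]
    [CompleteSpace 𝔸] (H : 𝔸) (t : ℝ) :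
    HasDerivAt (fun s : ℝ => NormedSpace.exp ((I * s) • H))
      (NormedSpace.exp ((I * t) • H) * (I • H)) t := by
  have h := (hasDerivAt_exp_smul_const (𝕂 := ℂ) (I • H) (t : ℂ)).scomp t ofRealCLM.hasDerivAt
  simpa [Function.comp_def, smul_smul, mul_comm _ I] using h

theorem HasDerivAt.matrix_mulVec {𝕜 𝕂 m n : Type*} [NontriviallyNormedField 𝕜] [NormedField 𝕂]
    [NormedAlgebra 𝕜 𝕂] [Fintype m] [Fintype n] {A : 𝕜 → Matrix m n 𝕂}
    {A' : Matrix m n 𝕂} {x : 𝕜 → n → 𝕂} {x' : n → 𝕂} {t : 𝕜}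
    (hA : HasDerivAt A A' t) (hx : HasDerivAt x x' t) :
    HasDerivAt (fun s => A s *ᵥ x s) (A' *ᵥ x t + A t *ᵥ x') t := by
  refine hasDerivAt_pi.mpr fun i => ?_
  have hentry (j : n) : HasDerivAt (fun s => A s i j) (A' i j) t :=
    (⟨entryLinearMap 𝕜 𝕂 i j, continuous_id.matrix_elem i j⟩ :
      Matrix m n 𝕂 →L[𝕜] 𝕂).hasFDerivAt.comp_hasDerivAt t hA
  simpa [mulVec, dotProduct, Finset.sum_add_distrib] using
    HasDerivAt.fun_sum fun j _ => (hentry j).mul (hasDerivAt_pi.mp hx j)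

theorem HasDerivAt.sumElim {𝕜 F m n : Type*} [NontriviallyNormedField 𝕜] [NormedAddCommGroup F]
    [NormedSpace 𝕜 F] [Fintype m] [Fintype n] {x : 𝕜 → m → F} {y : 𝕜 → n → F} {x' : m → F}
    {y' : n → F} {t : 𝕜} (hx : HasDerivAt x x' t) (hy : HasDerivAt y y' t) :
    HasDerivAt (fun s => Sum.elim (x s) (y s)) (Sum.elim x' y') t := by
  refine hasDerivAt_pi.mpr ?_
  rintro (i | i)
  · exact hasDerivAt_pi.mp hx i
  · exact hasDerivAt_pi.mp hy i

theorem hasDerivAt_integral_cexp_mul_sub_smul {E : Type*} [NormedAddCommGroup E]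
    [NormedSpace ℂ E] [CompleteSpace E] (c : ℂ) {f : ℝ → E} (hf : Continuous f) (t : ℝ) :
    HasDerivAt (fun u : ℝ => ∫ s in (0:ℝ)..u, cexp (-c * (u - s)) • f s)
      (f t - c • ∫ s in (0:ℝ)..t, cexp (-c * (t - s)) • f s) t := by
  have hsplit (u : ℝ) : ∫ s in (0:ℝ)..u, cexp (-c * (u - s)) • f s
      = cexp (-c * u) • ∫ s in (0:ℝ)..u, cexp (c * s) • f s := by
    rw [← intervalIntegral.integral_smul]
    refine intervalIntegral.integral_congr fun s _ => ?_
    rw [smul_smul, ← Complex.exp_add]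
    ring_nf
  simp only [hsplit]
  have hcont : Continuous fun s : ℝ => cexp (c * s) • f s := by fun_prop
  have hF := intervalIntegral.integral_hasDerivAt_right (hcont.intervalIntegrable 0 t)
    (hcont.stronglyMeasurableAtFilter _ _) hcont.continuousAt
  have he : HasDerivAt (fun u : ℝ => cexp (-c * u)) (cexp (-c * t) * (-c)) t := by
    simpa using (((hasDerivAt_id (t : ℂ)).const_mul (-c)).cexp).comp_ofReal
  refine (he.smul hF).congr_deriv ?_
  rw [smul_smul, ← Complex.exp_add, smul_smul]
  simp [sub_eq_add_neg, add_comm, mul_comm]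

theorem HasDerivAt.interaction_picture {m : Type*} [Fintype m] [DecidableEq m]
    {H₀ V : Matrix m m ℂ} (hV : Commute H₀ V) {χ : ℝ → m → ℂ} {t : ℝ}
    (hχ : HasDerivAt χ ((-I) • ((H₀ + V) *ᵥ χ t)) t) :
    HasDerivAt (fun s : ℝ => NormedSpace.exp ((I * s) • H₀) *ᵥ χ s)
      ((-I) • (V *ᵥ (NormedSpace.exp ((I * t) • H₀) *ᵥ χ t))) t := by
  have hUV : Commute (NormedSpace.exp ((I * t) • H₀)) V := (hV.smul_left _).exp_left
  refine ((hasDerivAt_exp_I_mul_smul H₀ t).matrix_mulVec hχ).congr_deriv ?_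
  rw [mulVec_mulVec _ V, ← hUV.eq, ← mulVec_mulVec, ← mulVec_mulVec, smul_mulVec, add_mulVec]
  simp only [mulVec_smul, mulVec_add]
  simp only [smul_add, neg_smul]
  abel

theorem hasDerivAt_pseudomode {m : Type*} [Fintype m] [DecidableEq m] (H : Matrix m m ℂ)
    {g γ ε : ℝ} {G : ℝ → ℂ}
    (hG : ∀ t : ℝ, G t = (g : ℂ) ^ 2 * cexp (-(γ / 2 : ℝ) * t - I * ε * t))
    {ψ φ : ℝ → m → ℂ} (hψc : Continuous ψ) {t : ℝ}
    (hψ : HasDerivAt ψ ((-I) • H *ᵥ ψ t - ∫ s in (0:ℝ)..t, G (t - s) • ψ s) t)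
    (hφ : ∀ t : ℝ, φ t = (-I * g) • ∫ s in (0:ℝ)..t,
      cexp (-((γ / 2 : ℝ) + I * ε) * (t - s)) • ψ s) :
    HasDerivAt (fun s => Sum.elim (ψ s) (φ s))
      ((-I) • (fromBlocks H ((g : ℂ) • 1) ((g : ℂ) • 1) (((ε : ℂ) - I * γ / 2) • 1) *ᵥ
        Sum.elim (ψ t) (φ t))) t := by
  set c : ℂ := (γ / 2 : ℝ) + I * ε
  set K : ℝ → m → ℂ := fun u => ∫ s in (0:ℝ)..u, cexp (-c * (u - s)) • ψ s
  have hφK : φ = fun u => (-I * g) • K u := funext hφ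
  have hmemory : ∫ s in (0:ℝ)..t, G (t - s) • ψ s = ((g : ℂ) ^ 2) • K t := by
    rw [← intervalIntegral.integral_smul]
    refine intervalIntegral.integral_congr fun s _ => ?_
    simp only [hG, c, smul_smul, mul_assoc]
    congr 3
    push_cast
    ring
  have hψ' : HasDerivAt ψ ((-I) • H *ᵥ ψ t - (g : ℂ) ^ 2 • K t) t := hmemory ▸ hψ
  have hφ' : HasDerivAt φ ((-I * g) • (ψ t - c • K t)) t :=
    hφK ▸ (hasDerivAt_integral_cexp_mul_sub_smul c hψc t).const_smul (-I * (g : ℂ))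
  refine (hψ'.sumElim hφ').congr_deriv ?_
  rw [fromBlocks_mulVec]
  simp only [hφK, c, Sum.elim_comp_inl, Sum.elim_comp_inr, smul_mulVec, one_mulVec]
  ext (i | i)
  · simp only [Sum.elim_inl, Pi.smul_apply, Pi.sub_apply, Pi.add_apply, smul_eq_mul]
    linear_combination -(g : ℂ) ^ 2 * K t i * I_sq
  · simp only [Sum.elim_inr, Pi.smul_apply, Pi.sub_apply, Pi.add_apply, smul_eq_mul]
    push_cast
    linear_combination (γ : ℂ) / 2 * g * K t i * I * I_sq

theorem stmt1_general (N : ℕ)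
    (H_S : Matrix (Fin N) (Fin N) ℂ)
    (g γ ε : ℝ)
    (G : ℝ → ℂ)
    (hG : ∀ t : ℝ, G t = (g : ℂ) ^ 2 * Complex.exp (-(γ / 2 : ℝ) * t - Complex.I * ε * t))
    (ψ : ℝ → Fin N → ℂ) (hψC : ContDiff ℝ 1 ψ)
    (hψ : ∀ t : ℝ, 0 ≤ t → HasDerivAt ψ
      ((-Complex.I) • H_S.mulVec (ψ t) - ∫ s in (0:ℝ)..t, G (t - s) • ψ s) t)
    (φ : ℝ → Fin N → ℂ)
    (hφ : ∀ t : ℝ, φ t = (-Complex.I * g) • ∫ s in (0:ℝ)..t,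
      Complex.exp (-((γ / 2 : ℝ) + Complex.I * ε) * (t - s)) • ψ s)
    (ψtI : ℝ → (Fin N ⊕ Fin N) → ℂ)
    (hψtI : ∀ t : ℝ, ψtI t = Sum.elim
      ((NormedSpace.exp ((Complex.I * t) • H_S)).mulVec (ψ t))
      ((NormedSpace.exp ((Complex.I * t) • H_S)).mulVec (φ t)))
    (HIeff : Matrix (Fin N ⊕ Fin N) (Fin N ⊕ Fin N) ℂ)
    (hHIeff : HIeff = Matrix.fromBlocks 0 ((g : ℂ) • 1) ((g : ℂ) • 1)
      (-H_S + ((ε : ℂ) - Complex.I * γ / 2) • 1)) :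
    (∀ t : ℝ, 0 ≤ t → HasDerivAt ψtI ((-Complex.I) • HIeff.mulVec (ψtI t)) t)
    ∧ ψtI 0 = Sum.elim (ψ 0) 0 := by
  set H₀ := fromBlocks H_S 0 0 H_S with hH₀
  have hφ0 : φ 0 = 0 := by simp [hφ]
  have hψtI_eq :
      ψtI = fun s : ℝ => NormedSpace.exp ((I * s) • H₀) *ᵥ Sum.elim (ψ s) (φ s) := by
    funext s
    rw [hψtI, hH₀, fromBlocks_smul, smul_zero, exp_fromBlocks_zero_zero, fromBlocks_mulVec]
    simp
  refine ⟨fun t ht => ?_, by simp [hψtI, hφ0]⟩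
  have hH₀_add : H₀ + HIeff =
      fromBlocks H_S ((g : ℂ) • 1) ((g : ℂ) • 1) (((ε : ℂ) - I * γ / 2) • 1) := by
    simp [H₀, hHIeff, fromBlocks_add]
  have hcomm : Commute H₀ HIeff := by
    simp [H₀, hHIeff, Commute, SemiconjBy, fromBlocks_multiply, mul_add, add_mul]
  rw [hψtI_eq]
  exact (hH₀_add ▸ hasDerivAt_pseudomode H_S hG hψC.continuous (hψ t ht) hφ).interaction_picture
    hcomm

theorem stmt1 (N : ℕ) (hN : 1 ≤ N)
    (H_S : Matrix (Fin N) (Fin N) ℂ) (hH : H_S.IsHermitian)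
    (g γ ε : ℝ) (hg : 0 < g) (hγ : 0 < γ)
    (G : ℝ → ℂ)
    (hG : ∀ t : ℝ, G t = (g : ℂ) ^ 2 * Complex.exp (-(γ / 2 : ℝ) * t - Complex.I * ε * t))
    (ψ : ℝ → Fin N → ℂ) (hψC : ContDiff ℝ 1 ψ)
    (hψ : ∀ t : ℝ, 0 ≤ t → HasDerivAt ψ
      ((-Complex.I) • H_S.mulVec (ψ t) - ∫ s in (0:ℝ)..t, G (t - s) • ψ s) t)
    (φ : ℝ → Fin N → ℂ)
    (hφ : ∀ t : ℝ, φ t = (-Complex.I * g) • ∫ s in (0:ℝ)..t,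
      Complex.exp (-((γ / 2 : ℝ) + Complex.I * ε) * (t - s)) • ψ s)
    (ψtI : ℝ → (Fin N ⊕ Fin N) → ℂ)
    (hψtI : ∀ t : ℝ, ψtI t = Sum.elim
      ((NormedSpace.exp ((Complex.I * t) • H_S)).mulVec (ψ t))
      ((NormedSpace.exp ((Complex.I * t) • H_S)).mulVec (φ t)))
    (HIeff : Matrix (Fin N ⊕ Fin N) (Fin N ⊕ Fin N) ℂ)
    (hHIeff : HIeff = Matrix.fromBlocks 0 ((g : ℂ) • 1) ((g : ℂ) • 1)
      (-H_S + ((ε : ℂ) - Complex.I * γ / 2) • 1)) :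
    (∀ t : ℝ, 0 ≤ t → HasDerivAt ψtI ((-Complex.I) • HIeff.mulVec (ψtI t)) t)
    ∧ ψtI 0 = Sum.elim (ψ 0) 0 :=
  stmt1_general N H_S g γ ε G hG ψ hψC hψ φ hφ ψtI hψtI HIeff hHIeff
end

section
/- Let g > 0, γ > 0 and ΔE ∈ ℝ. Consider the quadratic polynomial p(λ) = λ² + (γ/2 - iΔE)λ + g² over ℂ (the characteristic polynomial of the matrix [[0, -ig], [-ig, iΔE - γ/2]]). Set r = (√2/4)·√( (γ/2)² - 4g² - (ΔE)² + √( ((γ/2 + 2g)² + (ΔE)²)·((γ/2 - 2g)² + (ΔE)²) ) ). Then the expression under each square root is nonnegative, every complex root λ of p satisfies Re λ = -γ/4 + r or Re λ = -γ/4 - r, and each of these two values is the real part of some root of p. -/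
open Complex

noncomputable section

/-! The roots of `z² + b z + c` are `(-b ± s) / 2` with `s² = b² - 4c`, so their real parts are
`-Re b / 2 ± Re s / 2`. Writing `s = x + iy`, we have `|s²| + Re s² = 2x²`, so `|Re s|` is determined
by the discriminant alone: `|Re s| = √((|b² - 4c| + Re (b² - 4c)) / 2)`. For `b = γ/2 - iΔE` and
`c = g²` this gives `Re s / 2 = r`, because `|b² - 4g²|² = ((γ/2 + 2g)² + ΔE²)((γ/2 - 2g)² + ΔE²)`. -/

namespace Complex

theorem re_sq_eq_half_norm_add_re (s : ℂ) : s.re ^ 2 = (‖s ^ 2‖ + (s ^ 2).re) / 2 := by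
  rw [norm_pow, Complex.sq_norm, normSq_apply, sq s, mul_re]
  ring

theorem exists_sq_eq_and_re_eq_sqrt (D : ℂ) :
    ∃ s : ℂ, s ^ 2 = D ∧ s.re = √((‖D‖ + D.re) / 2) := by
  obtain ⟨s, hs⟩ := IsAlgClosed.exists_pow_nat_eq D two_pos
  have key (t : ℂ) (ht : t ^ 2 = D) (hre : 0 ≤ t.re) : t.re = √((‖D‖ + D.re) / 2) := by
    rw [← ht, ← re_sq_eq_half_norm_add_re, Real.sqrt_sq hre]
  rcases le_total 0 s.re with h | h
  · exact ⟨s, hs, key s hs h⟩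
  · exact ⟨-s, by rw [neg_sq, hs], key (-s) (by rw [neg_sq, hs]) (by simpa using h)⟩

theorem exists_re_eq_sqrt_and_quadratic_eq_zero_iff (b c : ℂ) :
    ∃ s : ℂ, s.re = √((‖b ^ 2 - 4 * c‖ + (b ^ 2 - 4 * c).re) / 2) ∧
      ∀ z : ℂ, z ^ 2 + b * z + c = 0 ↔ z = (-b + s) / 2 ∨ z = (-b - s) / 2 := by
  obtain ⟨s, hs, hre⟩ := exists_sq_eq_and_re_eq_sqrt (b ^ 2 - 4 * c)
  refine ⟨s, hre, fun z => ?_⟩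
  have hdiscrim : discrim 1 b c = s * s := by rw [discrim, ← sq, hs]; ring
  simpa [sq] using quadratic_eq_zero_iff one_ne_zero hdiscrim z

end Complex

theorem Real.sqrt_two_div_four_mul_sqrt (x : ℝ) : √2 / 4 * √x = √(x / 2) / 2 := by
  rw [Real.sqrt_div' x zero_le_two]
  field_simp
  rw [Real.sq_sqrt zero_le_two]
  ring

section

variable (g γ ΔE : ℝ)

theorem re_discrim_eq :
    ((((γ / 2 : ℝ) : ℂ) - I * ΔE) ^ 2 - 4 * (g : ℂ) ^ 2).re = (γ / 2) ^ 2 - 4 * g ^ 2 - ΔE ^ 2 := by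
  simp [sq]
  ring

theorem norm_discrim_eq :
    ‖(((γ / 2 : ℝ) : ℂ) - I * ΔE) ^ 2 - 4 * (g : ℂ) ^ 2‖ =
      √(((γ / 2 + 2 * g) ^ 2 + ΔE ^ 2) * ((γ / 2 - 2 * g) ^ 2 + ΔE ^ 2)) := by
  rw [norm_def, normSq_apply]
  congr 1
  simp [sq]
  ring

end

theorem stmt2_general (g γ ΔE : ℝ)
    (p : ℂ → ℂ)
    (hp : ∀ z : ℂ, p z = z ^ 2 + ((γ / 2 : ℝ) - Complex.I * ΔE) * z + (g : ℂ) ^ 2)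
    (r : ℝ)
    (hr : r = (Real.sqrt 2 / 4) * Real.sqrt ((γ / 2) ^ 2 - 4 * g ^ 2 - ΔE ^ 2 +
      Real.sqrt (((γ / 2 + 2 * g) ^ 2 + ΔE ^ 2) * ((γ / 2 - 2 * g) ^ 2 + ΔE ^ 2)))) :
    (0 ≤ ((γ / 2 + 2 * g) ^ 2 + ΔE ^ 2) * ((γ / 2 - 2 * g) ^ 2 + ΔE ^ 2)) ∧
    (0 ≤ (γ / 2) ^ 2 - 4 * g ^ 2 - ΔE ^ 2 +
      Real.sqrt (((γ / 2 + 2 * g) ^ 2 + ΔE ^ 2) * ((γ / 2 - 2 * g) ^ 2 + ΔE ^ 2))) ∧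
    (∀ z : ℂ, p z = 0 → z.re = -γ / 4 + r ∨ z.re = -γ / 4 - r) ∧
    (∃ z : ℂ, p z = 0 ∧ z.re = -γ / 4 + r) ∧
    (∃ z : ℂ, p z = 0 ∧ z.re = -γ / 4 - r) := by
  set b : ℂ := ((γ / 2 : ℝ) : ℂ) - I * ΔE
  obtain ⟨s, hs, hroots⟩ := exists_re_eq_sqrt_and_quadratic_eq_zero_iff b ((g : ℂ) ^ 2)
  rw [norm_discrim_eq, re_discrim_eq, add_comm] at hs
  have hr_eq : r = s.re / 2 := by rw [hr, hs, Real.sqrt_two_div_four_mul_sqrt]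
  have hp_roots (z : ℂ) : p z = 0 ↔ z = (-b + s) / 2 ∨ z = (-b - s) / 2 := hp z ▸ hroots z
  have hb : b.re = γ / 2 := by simp [b]
  have re_add : ((-b + s) / 2).re = -γ / 4 + r := by simp [hb, hr_eq]; ring
  have re_sub : ((-b - s) / 2).re = -γ / 4 - r := by simp [hb, hr_eq]; ring
  refine ⟨by positivity, ?_, fun z hz => ?_, ⟨_, (hp_roots _).2 (.inl rfl), re_add⟩,
    ⟨_, (hp_roots _).2 (.inr rfl), re_sub⟩⟩
  · have hre_ge := neg_le_of_abs_le (abs_re_le_norm (b ^ 2 - 4 * (g : ℂ) ^ 2))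
    rw [norm_discrim_eq, re_discrim_eq] at hre_ge
    linarith
  · rcases (hp_roots z).1 hz with rfl | rfl
    exacts [.inl re_add, .inr re_sub]

theorem stmt2 (g γ ΔE : ℝ) (hg : 0 < g) (hγ : 0 < γ)
    (p : ℂ → ℂ)
    (hp : ∀ z : ℂ, p z = z ^ 2 + ((γ / 2 : ℝ) - Complex.I * ΔE) * z + (g : ℂ) ^ 2)
    (r : ℝ)
    (hr : r = (Real.sqrt 2 / 4) * Real.sqrt ((γ / 2) ^ 2 - 4 * g ^ 2 - ΔE ^ 2 +
      Real.sqrt (((γ / 2 + 2 * g) ^ 2 + ΔE ^ 2) * ((γ / 2 - 2 * g) ^ 2 + ΔE ^ 2)))) :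
    (0 ≤ ((γ / 2 + 2 * g) ^ 2 + ΔE ^ 2) * ((γ / 2 - 2 * g) ^ 2 + ΔE ^ 2)) ∧
    (0 ≤ (γ / 2) ^ 2 - 4 * g ^ 2 - ΔE ^ 2 +
      Real.sqrt (((γ / 2 + 2 * g) ^ 2 + ΔE ^ 2) * ((γ / 2 - 2 * g) ^ 2 + ΔE ^ 2))) ∧
    (∀ z : ℂ, p z = 0 → z.re = -γ / 4 + r ∨ z.re = -γ / 4 - r) ∧
    (∃ z : ℂ, p z = 0 ∧ z.re = -γ / 4 + r) ∧
    (∃ z : ℂ, p z = 0 ∧ z.re = -γ / 4 - r) :=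
  stmt2_general g γ ΔE p hp r hr

end
end

section
/- Let N ≥ 1, let H_S be an N×N Hermitian complex matrix, let g > 0, γ > 0, ε ∈ ℝ. Set A = (γ/2)I_N - i(H_S - ε I_N) and Y(t) = g² A^{-1}(I_N - e^{-At}). Let ψ₀ ∈ ℂ be a constant, let ψ_I : ℝ → ℂ^N satisfy ψ_I'(t) = -Y(t)ψ_I(t), let σ : ℝ → M_N(ℂ) satisfy σ'(t) = -Y(t)σ(t) - σ(t)Y(t)†, and set ρ₀₀(t) = 1 - Tr σ(t). Set Ŷ(t) = 0 ⊕ Y(t) as an (N+1)×(N+1) matrix. Then ρ_SI(t) = ρ₀₀(t)|0⟩⟨0| + conj(ψ₀)|ψ_I(t)⟩⟨0| + ψ₀|0⟩⟨ψ_I(t)| + (0 ⊕ σ(t)) satisfies the non-Markovian Redfield equation dρ_SI/dt = |0⟩⟨0|·Tr(Ŷ(t)ρ_SI(t)) - Ŷ(t)ρ_SI(t) + |0⟩⟨0|·Tr(ρ_SI(t)Ŷ(t)†) - ρ_SI(t)Ŷ(t)†. -/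
/-!
Split `ℂ^{N+1} = ℂ ⊕ ℂ^N`. Then `ρ_SI` has the blocks `ρ₀₀`, `ψ₀ ψ_I†`, `conj ψ₀ ψ_I`, `σ`, and
`Ŷ = 0 ⊕ Y` only touches the lower block, so the Redfield right-hand side can be computed block by
block: it has the off-diagonal blocks `-ψ₀ (Yψ_I)†`, `-conj ψ₀ Yψ_I`, the lower block
`-Yσ - σY†`, and the vacuum entry `Tr(Yσ) + Tr(σY†) = -d/dt Tr σ`. These are exactly the
derivatives prescribed by the equations of motion of `ψ_I`, `σ` and `ρ₀₀ = 1 - Tr σ`.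
-/

open Matrix Complex

noncomputable section

-- Any norm would do; with the sup norm, `HasDerivAt` of a matrix function is literally entrywise.
attribute [local instance] Matrix.normedAddCommGroup Matrix.normedSpace

theorem Matrix.trace_fromBlocks {m n α : Type*} [Fintype m] [Fintype n] [AddCommMonoid α]
    (A : Matrix m m α) (B : Matrix m n α) (C : Matrix n m α) (D : Matrix n n α) :
    trace (fromBlocks A B C D) = trace A + trace D := by
  simp [trace, Fintype.sum_sum_type]

section MatrixDerivative

variable {l m n o 𝕜 F : Type*} [NontriviallyNormedField 𝕜] [NormedAddCommGroup F]
  [NormedSpace 𝕜 F] {t : 𝕜}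

theorem hasDerivAt_matrix_iff [Fintype m] [Fintype n] {M : 𝕜 → Matrix m n F}
    {M' : Matrix m n F} :
    HasDerivAt M M' t ↔ ∀ i j, HasDerivAt (fun τ => M τ i j) (M' i j) t :=
  hasDerivAt_pi.trans (forall_congr' fun _ => hasDerivAt_pi)

variable [Fintype l] [Fintype m] [Fintype n] [Fintype o]

theorem HasDerivAt.matrix_fromBlocks {A : 𝕜 → Matrix n l F} {B : 𝕜 → Matrix n m F}
    {C : 𝕜 → Matrix o l F} {D : 𝕜 → Matrix o m F} {A' : Matrix n l F} {B' : Matrix n m F}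
    {C' : Matrix o l F} {D' : Matrix o m F}
    (hA : HasDerivAt A A' t) (hB : HasDerivAt B B' t) (hC : HasDerivAt C C' t)
    (hD : HasDerivAt D D' t) :
    HasDerivAt (fun τ => fromBlocks (A τ) (B τ) (C τ) (D τ)) (fromBlocks A' B' C' D') t := by
  rw [hasDerivAt_matrix_iff] at *
  rintro (i | i) (j | j)
  exacts [hA i j, hB i j, hC i j, hD i j]

theorem HasDerivAt.matrix_trace {M : 𝕜 → Matrix n n F} {M' : Matrix n n F}
    (h : HasDerivAt M M' t) : HasDerivAt (fun τ => trace (M τ)) (trace M') t :=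
  HasDerivAt.fun_sum fun i _ => hasDerivAt_matrix_iff.mp h i i

theorem HasDerivAt.matrix_replicateRow {v : 𝕜 → n → F} {v' : n → F}
    (h : HasDerivAt v v' t) :
    HasDerivAt (fun τ => replicateRow o (v τ)) (replicateRow o v') t :=
  hasDerivAt_matrix_iff.mpr fun _ => hasDerivAt_pi.mp h

theorem HasDerivAt.matrix_replicateCol {v : 𝕜 → n → F} {v' : n → F}
    (h : HasDerivAt v v' t) :
    HasDerivAt (fun τ => replicateCol o (v τ)) (replicateCol o v') t :=
  hasDerivAt_matrix_iff.mpr fun i _ => hasDerivAt_pi.mp h i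

end MatrixDerivative

namespace Matrix

variable {n α : Type*} [CommRing α] [StarRing α]

def blockDensity (a c : α) (ψ : n → α) (S : Matrix n n α) : Matrix (Unit ⊕ n) (Unit ⊕ n) α :=
  fromBlocks (a • 1) (c • replicateRow Unit (star ψ)) (star c • replicateCol Unit ψ) S

theorem smul_vecMulVec_add_eq_blockDensity (a c : α) (ψ : n → α) (S : Matrix n n α) :
    a • vecMulVec (Sum.elim (fun _ : Unit => 1) 0) (star (Sum.elim (fun _ : Unit => 1) 0))
      + star c • vecMulVec (Sum.elim (fun _ : Unit => 0) ψ) (star (Sum.elim (fun _ : Unit => 1) 0))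
      + c • vecMulVec (Sum.elim (fun _ : Unit => 1) 0) (star (Sum.elim (fun _ : Unit => 0) ψ))
      + fromBlocks 0 0 0 S = blockDensity a c ψ S := by
  ext (i | i) (j | j) <;> simp [blockDensity, vecMulVec_apply]

variable [Fintype n]

theorem fromBlocks_zero_mul_blockDensity (a c : α) (ψ : n → α) (S Y : Matrix n n α) :
    fromBlocks 0 0 0 Y * blockDensity a c ψ S
      = fromBlocks 0 0 (star c • replicateCol Unit (Y *ᵥ ψ)) (Y * S) := by
  simp [blockDensity, fromBlocks_multiply, replicateCol_mulVec]

theorem blockDensity_mul_conjTranspose_fromBlocks_zero (a c : α) (ψ : n → α)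
    (S Y : Matrix n n α) :
    blockDensity a c ψ S * (fromBlocks 0 0 0 Y)ᴴ
      = fromBlocks 0 (c • replicateRow Unit (star (Y *ᵥ ψ))) 0 (S * Yᴴ) := by
  simp [blockDensity, fromBlocks_conjTranspose, fromBlocks_multiply, star_mulVec,
    replicateRow_vecMul]

theorem redfield_blockDensity (a c : α) (ψ : n → α) (S Y : Matrix n n α) :
    let ρ := blockDensity a c ψ S
    let Ŷ : Matrix (Unit ⊕ n) (Unit ⊕ n) α := fromBlocks 0 0 0 Y
    let E := vecMulVec (Sum.elim (fun _ : Unit => (1 : α)) 0)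
      (star (Sum.elim (fun _ : Unit => 1) 0))
    trace (Ŷ * ρ) • E - Ŷ * ρ + trace (ρ * Ŷᴴ) • E - ρ * Ŷᴴ
      = blockDensity (trace (Y * S) + trace (S * Yᴴ)) c (-(Y *ᵥ ψ)) (-(Y * S) - S * Yᴴ) := by
  intro ρ Ŷ E
  rw [fromBlocks_zero_mul_blockDensity, blockDensity_mul_conjTranspose_fromBlocks_zero,
    trace_fromBlocks, trace_fromBlocks]
  ext (i | i) (j | j) <;> simp [E, blockDensity, vecMulVec_apply]

end Matrix

theorem HasDerivAt.matrix_blockDensity {n 𝕜 : Type*} [Fintype n] [RCLike 𝕜] {t : ℝ}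
    {a : ℝ → 𝕜} {a' : 𝕜} (c : 𝕜) {ψ : ℝ → n → 𝕜} {ψ' : n → 𝕜} {S : ℝ → Matrix n n 𝕜}
    {S' : Matrix n n 𝕜} (ha : HasDerivAt a a' t) (hψ : HasDerivAt ψ ψ' t)
    (hS : HasDerivAt S S' t) :
    HasDerivAt (fun τ => blockDensity (a τ) c (ψ τ) (S τ)) (blockDensity a' c ψ' S') t :=
  (ha.smul_const 1).matrix_fromBlocks (hψ.star.matrix_replicateRow.const_smul c)
    (hψ.matrix_replicateCol.const_smul (star c)) hS

theorem stmt9_general (N : ℕ)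
    (Y : ℝ → Matrix (Fin N) (Fin N) ℂ)
    (e₀ : Unit ⊕ Fin N → ℂ) (he₀ : e₀ = Sum.elim (fun _ => 1) 0)
    (emb : (Fin N → ℂ) → (Unit ⊕ Fin N → ℂ))
    (hemb : ∀ v, emb v = Sum.elim (fun _ => 0) v)
    (ψ₀ : ℂ)
    (ψI : ℝ → Fin N → ℂ)
    (hψI : ∀ t : ℝ, HasDerivAt ψI (-(Y t).mulVec (ψI t)) t)
    (σ : ℝ → Matrix (Fin N) (Fin N) ℂ)
    (hσ : ∀ t : ℝ, ∀ i j, HasDerivAt (fun τ => σ τ i j)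
      ((-(Y t * σ t) - σ t * (Y t)ᴴ) i j) t)
    (ρ₀₀ : ℝ → ℂ) (hρ₀₀ : ∀ t, ρ₀₀ t = 1 - (σ t).trace)
    (Yhat : ℝ → Matrix (Unit ⊕ Fin N) (Unit ⊕ Fin N) ℂ)
    (hYhat : ∀ t, Yhat t = Matrix.fromBlocks 0 0 0 (Y t))
    (ρSI : ℝ → Matrix (Unit ⊕ Fin N) (Unit ⊕ Fin N) ℂ)
    (hρSI : ∀ t : ℝ, ρSI t =
      ρ₀₀ t • Matrix.vecMulVec e₀ (star e₀)
      + (starRingEnd ℂ ψ₀) • Matrix.vecMulVec (emb (ψI t)) (star e₀)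
      + ψ₀ • Matrix.vecMulVec e₀ (star (emb (ψI t)))
      + Matrix.fromBlocks 0 0 0 (σ t)) :
    ∀ t : ℝ, ∀ i j, HasDerivAt (fun τ => ρSI τ i j)
      ((((Yhat t * ρSI t).trace) • Matrix.vecMulVec e₀ (star e₀)
        - Yhat t * ρSI t
        + ((ρSI t * (Yhat t)ᴴ).trace) • Matrix.vecMulVec e₀ (star e₀)
        - ρSI t * (Yhat t)ᴴ) i j) t := by
  subst he₀
  obtain rfl : emb = fun v => Sum.elim (fun _ => 0) v := funext hemb
  obtain rfl : Yhat = fun t => fromBlocks 0 0 0 (Y t) := funext hYhat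
  obtain rfl : ρSI = fun τ => blockDensity (ρ₀₀ τ) ψ₀ (ψI τ) (σ τ) := by
    funext τ
    rw [hρSI, starRingEnd_apply, smul_vecMulVec_add_eq_blockDensity]
  intro t
  have hσ' : HasDerivAt σ (-(Y t * σ t) - σ t * (Y t)ᴴ) t := hasDerivAt_matrix_iff.mpr (hσ t)
  have hρ₀₀' : HasDerivAt ρ₀₀ (trace (Y t * σ t) + trace (σ t * (Y t)ᴴ)) t := by
    rw [funext hρ₀₀]
    exact (hσ'.matrix_trace.const_sub 1).congr_deriv (by rw [trace_sub, trace_neg]; ring)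
  rw [← hasDerivAt_matrix_iff, redfield_blockDensity]
  exact hρ₀₀'.matrix_blockDensity ψ₀ (hψI t) hσ'

theorem stmt9 (N : ℕ) (hN : 1 ≤ N)
    (H_S : Matrix (Fin N) (Fin N) ℂ) (hH : H_S.IsHermitian)
    (g γ ε : ℝ) (hg : 0 < g) (hγ : 0 < γ)
    (A : Matrix (Fin N) (Fin N) ℂ)
    (hA : A = ((γ / 2 : ℝ) : ℂ) • (1 : Matrix (Fin N) (Fin N) ℂ)
      - Complex.I • (H_S - (ε : ℂ) • 1))
    (Y : ℝ → Matrix (Fin N) (Fin N) ℂ)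
    (hY : ∀ t : ℝ, Y t = ((g : ℂ) ^ 2) • (A⁻¹ * (1 - NormedSpace.exp ((-(t : ℂ)) • A))))
    (e₀ : Unit ⊕ Fin N → ℂ) (he₀ : e₀ = Sum.elim (fun _ => 1) 0)
    (emb : (Fin N → ℂ) → (Unit ⊕ Fin N → ℂ))
    (hemb : ∀ v, emb v = Sum.elim (fun _ => 0) v)
    (ψ₀ : ℂ)
    (ψI : ℝ → Fin N → ℂ)
    (hψI : ∀ t : ℝ, HasDerivAt ψI (-(Y t).mulVec (ψI t)) t)
    (σ : ℝ → Matrix (Fin N) (Fin N) ℂ)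
    (hσ : ∀ t : ℝ, ∀ i j, HasDerivAt (fun τ => σ τ i j)
      ((-(Y t * σ t) - σ t * (Y t)ᴴ) i j) t)
    (ρ₀₀ : ℝ → ℂ) (hρ₀₀ : ∀ t, ρ₀₀ t = 1 - (σ t).trace)
    (Yhat : ℝ → Matrix (Unit ⊕ Fin N) (Unit ⊕ Fin N) ℂ)
    (hYhat : ∀ t, Yhat t = Matrix.fromBlocks 0 0 0 (Y t))
    (ρSI : ℝ → Matrix (Unit ⊕ Fin N) (Unit ⊕ Fin N) ℂ)
    (hρSI : ∀ t : ℝ, ρSI t =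
      ρ₀₀ t • Matrix.vecMulVec e₀ (star e₀)
      + (starRingEnd ℂ ψ₀) • Matrix.vecMulVec (emb (ψI t)) (star e₀)
      + ψ₀ • Matrix.vecMulVec e₀ (star (emb (ψI t)))
      + Matrix.fromBlocks 0 0 0 (σ t)) :
    ∀ t : ℝ, ∀ i j, HasDerivAt (fun τ => ρSI τ i j)
      ((((Yhat t * ρSI t).trace) • Matrix.vecMulVec e₀ (star e₀)
        - Yhat t * ρSI t
        + ((ρSI t * (Yhat t)ᴴ).trace) • Matrix.vecMulVec e₀ (star e₀)
        - ρSI t * (Yhat t)ᴴ) i j) t :=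
  stmt9_general N Y e₀ he₀ emb hemb ψ₀ ψI hψI σ hσ ρ₀₀ hρ₀₀ Yhat hYhat ρSI hρSI
end
end

section
/- Let a₁, a₂, a₃, x ∈ ℝ. Every complex root λ of the cubic polynomial f(λ) = λ³ + a₁λ² + a₂λ + a₃ satisfies Re λ < x if and only if the following three inequalities hold: a₁ > -3x, (a₁ + 3x)(a₂ + 2a₁x + 3x²) > a₃ + a₂x + a₁x² + x³, and a₃ + a₂x + a₁x² + x³ > 0. -/
/-!
Translating `z ↦ z + x` turns the claim into the Routh–Hurwitz criterion for `x = 0`: all roots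
of `z³ + b₁z² + b₂z + b₃` lie in `Re z < 0` iff `b₁ > 0`, `b₁b₂ > b₃`, `b₃ > 0`. For necessity,
split off a real root `r < 0`; the remaining quadratic `z² + pz + q` has stable roots, so
`p, q > 0`, and then `b₃ = -rq` and `b₁b₂ - b₃ = p(q - pr + r²)` are positive. For sufficiency,
a root `α + iβ` with `α ≥ 0` is impossible: if `β = 0` every term of the cubic is `≥ 0` with
`b₃ > 0`, and otherwise the imaginary part gives `β² = 3α² + 2b₁α + b₂`, which turns the real
part into `8α³ + 8b₁α² + 2(b₂ + b₁²)α + (b₁b₂ - b₃) = 0`, a positive term plus nonnegative ones.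
-/

open Complex

lemma exists_real_root_of_cubic (b₁ b₂ b₃ : ℝ) : ∃ r : ℝ, r ^ 3 + b₁ * r ^ 2 + b₂ * r + b₃ = 0 := by
  set M := 1 + |b₁| + |b₂| + |b₃|
  have h₁ := abs_le.mp (le_refl |b₁|)
  have h₂ := abs_le.mp (le_refl |b₂|)
  have h₃ := abs_le.mp (le_refl |b₃|)
  have hM : 1 ≤ M := by linarith
  have hneg : (-M) ^ 3 + b₁ * (-M) ^ 2 + b₂ * (-M) + b₃ ≤ 0 := by nlinarith
  have hpos : 0 ≤ M ^ 3 + b₁ * M ^ 2 + b₂ * M + b₃ := by nlinarith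
  obtain ⟨r, -, hr⟩ := intermediate_value_Icc (by linarith) (by fun_prop :
    Continuous fun t : ℝ ↦ t ^ 3 + b₁ * t ^ 2 + b₂ * t + b₃).continuousOn ⟨hneg, hpos⟩
  exact ⟨r, hr⟩

lemma cubic_eq_mul_quadratic {R : Type*} [CommRing R] {b₁ b₂ b₃ r : R}
    (hr : r ^ 3 + b₁ * r ^ 2 + b₂ * r + b₃ = 0) (z : R) :
    z ^ 3 + b₁ * z ^ 2 + b₂ * z + b₃ = (z - r) * (z ^ 2 + (b₁ + r) * z + (b₂ + b₁ * r + r ^ 2)) := by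
  linear_combination hr

lemma quadratic_coeffs_pos_of_forall_re_neg {p q : ℝ}
    (h : ∀ z : ℂ, z ^ 2 + p * z + q = 0 → z.re < 0) : 0 < p ∧ 0 < q := by
  rcases le_or_gt (p ^ 2) (4 * q) with hd | hd
  · -- a pair of conjugate roots with real part `-p/2`
    set β := √(4 * q - p ^ 2) / 2
    have hβ : β ^ 2 = (4 * q - p ^ 2) / 4 := by
      rw [div_pow, Real.sq_sqrt (by linarith)]; ring
    have hre := h ⟨-p / 2, β⟩ <| by
      apply Complex.ext <;> simp [sq] <;> nlinarith
    simp only at hre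
    exact ⟨by linarith, by nlinarith⟩
  · -- two real roots `t₁, t₂` with `t₁ + t₂ = -p` and `t₁ t₂ = q`
    set s := √(p ^ 2 - 4 * q)
    have hs : s ^ 2 = p ^ 2 - 4 * q := Real.sq_sqrt (by linarith)
    have root (t : ℝ) (ht : t ^ 2 + p * t + q = 0) : t < 0 := by
      simpa using h t (by exact_mod_cast congrArg ofReal ht)
    have h₁ := root ((-p + s) / 2) (by linear_combination hs / 4)
    have h₂ := root ((-p - s) / 2) (by linear_combination hs / 4)
    exact ⟨by linarith, by nlinarith [mul_pos_of_neg_of_neg h₁ h₂]⟩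

lemma cubic_coeffs_pos_of_forall_re_neg {b₁ b₂ b₃ : ℝ}
    (h : ∀ z : ℂ, z ^ 3 + b₁ * z ^ 2 + b₂ * z + b₃ = 0 → z.re < 0) :
    0 < b₁ ∧ b₃ < b₁ * b₂ ∧ 0 < b₃ := by
  obtain ⟨r, hr⟩ := exists_real_root_of_cubic b₁ b₂ b₃
  have hrC : (r : ℂ) ^ 3 + b₁ * (r : ℂ) ^ 2 + b₂ * r + b₃ = 0 := by
    exact_mod_cast congrArg ofReal hr
  have hr_neg : r < 0 := by simpa using h r hrC
  obtain ⟨hp, hq⟩ := quadratic_coeffs_pos_of_forall_re_neg (p := b₁ + r) (q := b₂ + b₁ * r + r ^ 2)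
    fun z hz ↦ h z <| by rw [cubic_eq_mul_quadratic hrC]; push_cast at hz; rw [hz, mul_zero]
  have hb₃ : b₃ = -r * (b₂ + b₁ * r + r ^ 2) := by linear_combination hr
  have hdiff : b₁ * b₂ - b₃ = (b₁ + r) * ((b₂ + b₁ * r + r ^ 2) - (b₁ + r) * r + r ^ 2) := by
    rw [hb₃]; ring
  have hfactor : 0 < (b₂ + b₁ * r + r ^ 2) - (b₁ + r) * r + r ^ 2 := by
    nlinarith [mul_pos hp (neg_pos.mpr hr_neg)]
  refine ⟨by linarith, by linarith [mul_pos hp hfactor], ?_⟩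
  rw [hb₃]
  exact mul_pos (neg_pos.mpr hr_neg) hq

lemma re_neg_of_cubic_root {b₁ b₂ b₃ : ℝ} (h₁ : 0 < b₁) (h₂ : b₃ < b₁ * b₂) (h₃ : 0 < b₃)
    {z : ℂ} (hz : z ^ 3 + b₁ * z ^ 2 + b₂ * z + b₃ = 0) : z.re < 0 := by
  obtain ⟨α, β⟩ := z
  have hre := congrArg re hz
  have him := congrArg im hz
  simp only [pow_succ, pow_zero, one_mul, add_re, add_im, mul_re, mul_im, ofReal_re, ofReal_im,
    zero_mul, sub_zero, add_zero, zero_re, zero_im] at hre him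
  by_contra! hα
  have hb₂ : 0 < b₂ := by nlinarith
  rcases mul_eq_zero.mp
      (by linear_combination him : β * (3 * α ^ 2 + 2 * b₁ * α + b₂ - β ^ 2) = 0) with hβ | hβ
  · subst hβ
    nlinarith [pow_nonneg hα 3, pow_nonneg hα 2]
  · have : 8 * α ^ 3 + 8 * b₁ * α ^ 2 + 2 * (b₂ + b₁ ^ 2) * α + (b₁ * b₂ - b₃) = 0 := by
      linear_combination -hre + (3 * α + b₁) * hβ
    nlinarith [pow_nonneg hα 3, mul_nonneg h₁.le (sq_nonneg α),
      mul_nonneg (by positivity : 0 ≤ b₂ + b₁ ^ 2) hα]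

theorem forall_re_neg_iff_of_cubic (b₁ b₂ b₃ : ℝ) :
    (∀ z : ℂ, z ^ 3 + b₁ * z ^ 2 + b₂ * z + b₃ = 0 → z.re < 0) ↔
      0 < b₁ ∧ b₃ < b₁ * b₂ ∧ 0 < b₃ :=
  ⟨cubic_coeffs_pos_of_forall_re_neg, fun ⟨h₁, h₂, h₃⟩ _ ↦ re_neg_of_cubic_root h₁ h₂ h₃⟩

theorem stmt11 (a₁ a₂ a₃ x : ℝ) :
    (∀ z : ℂ, z ^ 3 + (a₁ : ℂ) * z ^ 2 + (a₂ : ℂ) * z + (a₃ : ℂ) = 0 → z.re < x) ↔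
    (a₁ > -3 * x ∧
      (a₁ + 3 * x) * (a₂ + 2 * a₁ * x + 3 * x ^ 2) > a₃ + a₂ * x + a₁ * x ^ 2 + x ^ 3 ∧
      a₃ + a₂ * x + a₁ * x ^ 2 + x ^ 3 > 0) := by
  have shift (w : ℂ) : (w + x) ^ 3 + a₁ * (w + x) ^ 2 + a₂ * (w + x) + a₃ =
      w ^ 3 + ((a₁ + 3 * x : ℝ) : ℂ) * w ^ 2 + ((a₂ + 2 * a₁ * x + 3 * x ^ 2 : ℝ) : ℂ) * w +
        ((a₃ + a₂ * x + a₁ * x ^ 2 + x ^ 3 : ℝ) : ℂ) := by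
    push_cast; ring
  have hre_shift : (∀ z : ℂ, z ^ 3 + a₁ * z ^ 2 + a₂ * z + a₃ = 0 → z.re < x) ↔
      ∀ w : ℂ, (w + x) ^ 3 + a₁ * (w + x) ^ 2 + a₂ * (w + x) + a₃ = 0 → w.re < 0 := by
    refine ⟨fun h w hw ↦ ?_, fun h z hz ↦ ?_⟩
    · simpa using h _ hw
    · simpa using h (z - x) (by simpa using hz)
  simp_rw [hre_shift, shift, forall_re_neg_iff_of_cubic, gt_iff_lt, neg_mul, neg_lt_iff_pos_add]
end
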